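/- arXiv:2408.07312 — 3 statements merged into one kernel-verified Lean document; each statement's English description precedes it below -/
import Mathlib

section
/- For every i ∈ I the braid symmetry T_i satisfies: (i) D̄ ∘ T_i = T_i ∘ D̄; (ii) T_i^⋆ = ⋆ ∘ T_i ∘ ⋆; (iii) T_i ∘ bar = bar ∘ T_i; (iv) T_i ∘ c = c ∘ T_i; (v) wt(T_i x) = s_i(wt(x)) for every homogeneous x ∈ Â, where s_i(λ) = λ − ⟨h_i,λ⟩α_i; (vi) T_i(Â[a,b]) ⊆ Â[a,b+1] and T_i^⋆(Â[a,b]) ⊆ Â[a−1,b] for all a ≤ b. -/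
noncomputable section
open scoped Classical
open Finset

/-! ## The base field `k = ℚ(q^{1/2})` -/

/-- The base field `k = ℚ(q^{1/2})`, realized as the field of rational functions over `ℚ`
in the variable `vv`, which plays the role of the formal square root `q^{1/2}`. -/
abbrev kk : Type := RatFunc ℚ

/-- The formal square root `q^{1/2}`. -/
def vv : kk := RatFunc.X

/-- The quantum parameter `q = (q^{1/2})^2`. -/
def qq : kk := vv ^ 2

/-- The quantum integer `[n]_t = t^{n-1} + t^{n-3} + ⋯ + t^{1-n}`. -/
def qint (t : kk) (n : ℕ) : kk := ∑ k ∈ Finset.range n, t ^ ((n : ℤ) - 1 - 2 * (k : ℤ))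

/-- The quantum factorial `[n]_t!`. -/
def qfact (t : kk) (n : ℕ) : kk := ∏ s ∈ Finset.range n, qint t (s + 1)

/-- The quantum binomial coefficient `[m choose k]_t`. -/
def qbinom (t : kk) (m k : ℕ) : kk := qfact t m / (qfact t k * qfact t (m - k))

/-! ## Cartan data -/

/-- A symmetrizable generalized Cartan matrix together with symmetrizers. -/
structure CartanDatum (I : Type) [Fintype I] [DecidableEq I] where
  c : I → I → ℤ
  d : I → ℤ
  d_pos : ∀ i, 0 < d i
  c_diag : ∀ i, c i i = 2
  c_offdiag : ∀ i j, i ≠ j → c i j ≤ 0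
  symm : ∀ i j, d i * c i j = d j * c j i

variable {I : Type} [Fintype I] [DecidableEq I]

/-- The simple root `α_i` as an element of the root lattice `Q = I → ℤ`. -/
def alphaF (i : I) : I → ℤ := fun j => if j = i then 1 else 0

/-- The symmetric bilinear form on the root lattice, `(α_i, α_j) = d_i c_{ij}`. -/
def CartanDatum.form (A : CartanDatum I) (α β : I → ℤ) : ℤ :=
  ∑ i, ∑ j, α i * (A.d i * A.c i j) * β j

/-- `q_i = q^{d_i}`. -/
def qi (A : CartanDatum I) (i : I) : kk := qq ^ (A.d i)

/-- `q_i^{1/2} = (q^{1/2})^{d_i}`. -/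
def sqi (A : CartanDatum I) (i : I) : kk := vv ^ (A.d i)

/-! ## The bosonic extension `Â` -/

/-- The free algebra on the generators `f_{i,p}`, `i ∈ I`, `p ∈ ℤ`. -/
abbrev FA (I : Type) [Fintype I] [DecidableEq I] := FreeAlgebra kk (I × ℤ)

/-- The generator `f_{i,p}` of the free algebra. -/
def Xg (p : I × ℤ) : FA I := FreeAlgebra.ι kk p

/-- The defining relations of the bosonic extension: the `q`-Serre relations and the
`q`-boson relations. -/
inductive AhatRel (A : CartanDatum I) : FA I → FA I → Prop
  | serre (i j : I) (p : ℤ) (h : i ≠ j) :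
      AhatRel A
        (∑ k ∈ Finset.range ((1 - A.c i j).toNat + 1),
          (((-1 : kk) ^ k * qbinom (qi A i) (1 - A.c i j).toNat k) •
            (Xg (i, p) ^ k * Xg (j, p) * Xg (i, p) ^ ((1 - A.c i j).toNat - k))))
        0
  | boson (i j : I) (m p : ℤ) (h : m < p) :
      AhatRel A (Xg (i, m) * Xg (j, p))
        ((qq ^ ((-1 : ℤ) ^ (p - m + 1).natAbs * A.form (alphaF i) (alphaF j))) •
            (Xg (j, p) * Xg (i, m)) +
          (if j = i ∧ p = m + 1 then ((1 : kk) - (qi A i) ^ 2) • (1 : FA I) else 0))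

/-- The bosonic extension `Â` associated to the Cartan datum `A`. -/
abbrev Ahat (A : CartanDatum I) := RingQuot (AhatRel A)

/-- The generator `f_{i,m}` of `Â`. -/
def fgen (A : CartanDatum I) (i : I) (m : ℤ) : Ahat A :=
  RingQuot.mkAlgHom kk (AhatRel A) (Xg (i, m))

/-- The divided power `F_{i,m}^{(n)}` of `F_{i,m} = q_i^{1/2} (1-q_i^2)^{-1} f_{i,m}`. -/
def Fdiv (A : CartanDatum I) (i : I) (m : ℤ) (n : ℕ) : Ahat A :=
  ((sqi A i * (1 - qi A i ^ 2)⁻¹) ^ n / qfact (qi A i) n) • fgen A i m ^ n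

/-- `T` is the braid symmetry `T_i` of `Â`: a `k`-algebra automorphism acting on the
generators by the formulas of Theorem (T-braid). -/
def IsBraidT (A : CartanDatum I) (i : I) (T : Ahat A ≃ₐ[kk] Ahat A) : Prop :=
  (∀ m : ℤ, T (fgen A i m) = fgen A i (m + 1)) ∧
  ∀ j : I, j ≠ i → ∀ m : ℤ,
    T (fgen A j m) =
      ∑ r ∈ Finset.range ((-A.c i j).toNat + 1),
        ((-qi A i) ^ ((-A.c i j).toNat - r)) •
          (Fdiv A i m r * fgen A j m * Fdiv A i m ((-A.c i j).toNat - r))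

/-- `T` is the inverse braid symmetry `T_i^⋆` of `Â`. -/
def IsBraidTStar (A : CartanDatum I) (i : I) (T : Ahat A ≃ₐ[kk] Ahat A) : Prop :=
  (∀ m : ℤ, T (fgen A i m) = fgen A i (m - 1)) ∧
  ∀ j : I, j ≠ i → ∀ m : ℤ,
    T (fgen A j m) =
      ∑ r ∈ Finset.range ((-A.c i j).toNat + 1),
        ((-qi A i) ^ r) •
          (Fdiv A i m r * fgen A j m * Fdiv A i m ((-A.c i j).toNat - r))
/-! ## Gradings, distinguished subalgebras and (anti-)automorphisms -/

/-- The weight of a list of generator indices: `wt (f_{i,m}) = -(-1)^m α_i`. -/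
def wtList (L : List (I × ℤ)) : I → ℤ :=
  fun j => (L.map (fun p => if p.1 = j then -(-1 : ℤ) ^ p.2.natAbs else 0)).sum

/-- The weight space of weight `β` of `Â`, spanned by the monomials in the generators of
total weight `β`. -/
def wtSpace (A : CartanDatum I) (β : I → ℤ) : Submodule kk (Ahat A) :=
  Submodule.span kk
    {x | ∃ L : List (I × ℤ), wtList L = β ∧ x = (L.map (fun p => fgen A p.1 p.2)).prod}

/-- The subalgebra of `Â` generated by the `f_{i,m}` with `m` satisfying `P`. -/
def subOf (A : CartanDatum I) (P : ℤ → Prop) : Subalgebra kk (Ahat A) :=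
  Algebra.adjoin kk {x | ∃ i m, P m ∧ x = fgen A i m}

/-- The subalgebra `Â[a,b]`. -/
def subAB (A : CartanDatum I) (a b : ℤ) : Subalgebra kk (Ahat A) :=
  subOf A (fun m => a ≤ m ∧ m ≤ b)

/-- The subalgebra `Â_{≥ m}`. -/
def subGE (A : CartanDatum I) (m : ℤ) : Subalgebra kk (Ahat A) := subOf A (fun p => m ≤ p)

/-- The subalgebra `Â_{< m}`. -/
def subLT (A : CartanDatum I) (m : ℤ) : Subalgebra kk (Ahat A) := subOf A (fun p => p < m)

/-- The simple reflection `s_i` acting on the root lattice. -/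
def siRef (A : CartanDatum I) (i : I) (β : I → ℤ) : I → ℤ :=
  fun j => β j - (∑ l, β l * A.c i l) * (if j = i then 1 else 0)

/-- `S` is the anti-automorphism `⋆` of `Â`, with `(f_{i,p})^⋆ = f_{i,-p}`. -/
structure IsStar (A : CartanDatum I) (S : Ahat A → Ahat A) : Prop where
  bij : Function.Bijective S
  map_add : ∀ x y, S (x + y) = S x + S y
  map_mul : ∀ x y, S (x * y) = S y * S x
  map_smul : ∀ (a : kk) (x : Ahat A), S (a • x) = a • S x
  map_one : S 1 = 1
  map_gen : ∀ i p, S (fgen A i p) = fgen A i (-p)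

/-- `bb` is the bar anti-automorphism of `Â`: it is semilinear with respect to the
involution `barK` of `k` sending `q^{±1/2}` to `q^{∓1/2}` and fixes the generators. -/
structure IsBar (A : CartanDatum I) (barK : kk →+* kk) (bb : Ahat A → Ahat A) : Prop where
  barK_v : barK vv = vv⁻¹
  bij : Function.Bijective bb
  map_add : ∀ x y, bb (x + y) = bb x + bb y
  map_mul : ∀ x y, bb (x * y) = bb y * bb x
  map_smul : ∀ (a : kk) (x : Ahat A), bb (a • x) = barK a • bb x
  map_gen : ∀ i p, bb (fgen A i p) = fgen A i p

/-- `cc` is the twisted bar involution `c` of `Â`: `c(x) = q^{N(wt x)} bar(x)` on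
homogeneous elements, where `N(β) = (β,β)/2`, so `q^{N(β)} = (q^{1/2})^{(β,β)}`. -/
structure IsC (A : CartanDatum I) (bb cc : Ahat A → Ahat A) : Prop where
  map_add : ∀ x y, cc (x + y) = cc x + cc y
  homog : ∀ (β : I → ℤ), ∀ x ∈ wtSpace A β, cc x = (vv ^ A.form β β) • bb x

/-- `D` is the shift automorphism `D̄` of `Â`, sending `f_{i,p}` to `f_{i,p+1}`. -/
def IsDbar (A : CartanDatum I) (D : Ahat A ≃ₐ[kk] Ahat A) : Prop :=
  ∀ i p, D (fgen A i p) = fgen A i (p + 1)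

/-! ## The projection `M` and the bilinear forms -/

/-- The ordered product `g(b) g(b-1) ⋯ g(a)` (indices decreasing from left to right). -/
def descProd (A : CartanDatum I) (g : ℤ → Ahat A) (a b : ℤ) : Ahat A :=
  ((List.range (b + 1 - a).toNat).map (fun t => g (b - (t : ℤ)))).prod

/-- `M` is the projection `Â → k` onto the trivial component of the triangular
decomposition `Â = ⊕ ∏→ Â[k]_{β_k}`: it sends `1` to `1` and kills every ordered
product of homogeneous components one of whose weights is nonzero. -/
def IsProjM (A : CartanDatum I) (M : Ahat A →ₗ[kk] kk) : Prop :=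
  M 1 = 1 ∧
  ∀ a b : ℤ, ∀ β : ℤ → (I → ℤ), (∃ k, a ≤ k ∧ k ≤ b ∧ β k ≠ 0) →
    ∀ g : ℤ → Ahat A,
      (∀ k, a ≤ k → k ≤ b → g k ∈ subAB A k k ∧ g k ∈ wtSpace A (β k)) →
      M (descProd A g a b) = 0

/-! ## Braid words -/

/-- The alternating composition `S ∘ T ∘ S ∘ ⋯` with `n` factors (as automorphisms,
`AlgEquiv.trans e f = f ∘ e`). -/
def altWord {A₁ : Type} [Semiring A₁] [Algebra kk A₁] :
    (A₁ ≃ₐ[kk] A₁) → (A₁ ≃ₐ[kk] A₁) → ℕ → (A₁ ≃ₐ[kk] A₁)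
  | _, _, 0 => AlgEquiv.refl
  | S, T, n + 1 => (altWord T S n).trans S

/-- The alternating composition `f ∘ g ∘ f ∘ ⋯` with `n` factors, for plain functions. -/
def altFun {X : Type} : (X → X) → (X → X) → ℕ → (X → X)
  | _, _, 0 => id
  | f, g, n + 1 => f ∘ (altFun g f n)

/-- The order `m_{i,j}` of the braid relation between `r_i` and `r_j`
(finite exactly when `c_{ij} c_{ji} ≤ 3`). -/
def mij (A : CartanDatum I) (i j : I) : ℕ :=
  if A.c i j * A.c j i ≤ 2 then (A.c i j * A.c j i + 2).toNat else 6

/-- The composition `T_{i_1} ∘ T_{i_2} ∘ ⋯ ∘ T_{i_n}` attached to a sequence `ii`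
(0-indexed: `ii t` is `i_{t+1}`). -/
def Tpref (A : CartanDatum I) (T : I → (Ahat A ≃ₐ[kk] Ahat A)) (ii : ℕ → I) :
    ℕ → (Ahat A ≃ₐ[kk] Ahat A)
  | 0 => AlgEquiv.refl
  | n + 1 => (T (ii n)).trans (Tpref A T ii n)

/-- The cuspidal element `P^i_{k+1} = T_{i_1} ⋯ T_{i_k} (q_{i_{k+1}}^{1/2} f_{i_{k+1},0})`
(0-indexed in `k`). -/
def cusp (A : CartanDatum I) (T : I → (Ahat A ≃ₐ[kk] Ahat A)) (ii : ℕ → I) (k : ℕ) :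
    Ahat A :=
  Tpref A T ii k ((vv ^ A.d (ii k)) • fgen A (ii k) 0)

/-- The divided cuspidal element `P_k^{i,(m)} = q_{i_k}^{m(m-1)/2} (P^i_k)^m`. -/
def cuspDiv (A : CartanDatum I) (T : I → (Ahat A ≃ₐ[kk] Ahat A)) (ii : ℕ → I)
    (k : ℕ) (m : ℕ) : Ahat A :=
  (qq ^ (A.d (ii k) * (m.choose 2 : ℤ))) • (cusp A T ii k) ^ m

/-- The PBW element `P^i(u) = P_r^{(u_r)} ⋯ P_1^{(u_1)}` (factors with decreasing index
from left to right), for `u : ℕ → ℕ`. -/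
def pbw (A : CartanDatum I) (T : I → (Ahat A ≃ₐ[kk] Ahat A)) (ii : ℕ → I)
    (r : ℕ) (u : ℕ → ℕ) : Ahat A :=
  ((List.range r).map (fun t => cuspDiv A T ii (r - 1 - t) (u (r - 1 - t)))).prod

/-- The PBW element `P^i(u)` for `u : Fin r → ℕ`. -/
def pbwF (A : CartanDatum I) (T : I → (Ahat A ≃ₐ[kk] Ahat A)) (ii : ℕ → I)
    (r : ℕ) (u : Fin r → ℕ) : Ahat A :=
  ((List.finRange r).reverse.map (fun k : Fin r => cuspDiv A T ii k.1 (u k))).prod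

/-- The prefix `s_{i_1} s_{i_2} ⋯ s_{i_n}` of simple reflections applied to a weight. -/
def sPref (A : CartanDatum I) (ii : ℕ → I) : ℕ → (I → ℤ) → (I → ℤ)
  | 0 => id
  | n + 1 => fun β => sPref A ii n (siRef A (ii n) β)

/-- The weight of the cuspidal element `P^i_{k+1}` (0-indexed). -/
def wtCusp (A : CartanDatum I) (ii : ℕ → I) (k : ℕ) : I → ℤ :=
  sPref A ii k (fun j => -(alphaF (ii k) j))

/-!
Everything reduces to the generators `f_{j,m}`. The maps compared in (i)–(iii) are semilinear
and (anti-)multiplicative, so they agree as soon as they agree on generators; there the identities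
come from reindexing `r ↦ n - r` in the braid formula, since `⋆` sends `F_{i,m}^{(n)}` to
`F_{i,-m}^{(n)}` and bar rescales it by `(-q_i)^n`. In (v), `T_i` sends every generator to an
element of weight `s_i (wt f_{j,m})`, hence every monomial as well; (iv) then follows from
(iii) and (v) on homogeneous elements, because `s_i` preserves `(β, β)` and `Â` is the sum of
its weight spaces. For (vi), `T_i f_{j,m}` involves only `f_{i,m}`, `f_{j,m}` and `f_{i,m+1}`.
-/

section Scalars

lemma vv_ne_zero : vv ≠ 0 := RatFunc.X_ne_zero

lemma qi_ne_zero (A : CartanDatum I) (i : I) : qi A i ≠ 0 :=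
  zpow_ne_zero _ (pow_ne_zero _ vv_ne_zero)

lemma qi_eq_sqi_sq (A : CartanDatum I) (i : I) : qi A i = sqi A i ^ 2 := by
  rw [qi, qq, sqi, ← zpow_natCast, ← zpow_natCast, ← zpow_mul, ← zpow_mul, mul_comm]

variable {barK : kk →+* kk}

lemma map_sqi_of_map_vv (hv : barK vv = vv⁻¹) (A : CartanDatum I) (i : I) :
    barK (sqi A i) = (sqi A i)⁻¹ := by
  rw [sqi, map_zpow₀, hv, inv_zpow]

lemma map_qi_of_map_vv (hv : barK vv = vv⁻¹) (A : CartanDatum I) (i : I) :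
    barK (qi A i) = (qi A i)⁻¹ := by
  rw [qi_eq_sqi_sq, map_pow, map_sqi_of_map_vv hv, inv_pow]

lemma map_qint_of_map_vv (hv : barK vv = vv⁻¹) (A : CartanDatum I) (i : I) (n : ℕ) :
    barK (qint (qi A i) n) = qint (qi A i) n := by
  rw [qint, map_sum, ← Finset.sum_range_reflect]
  refine Finset.sum_congr rfl fun k hk => ?_
  rw [map_zpow₀, map_qi_of_map_vv hv, inv_zpow, ← zpow_neg]
  have := Finset.mem_range.mp hk
  congr 1
  omega

lemma map_qfact_of_map_vv (hv : barK vv = vv⁻¹) (A : CartanDatum I) (i : I) (n : ℕ) :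
    barK (qfact (qi A i) n) = qfact (qi A i) n := by
  rw [qfact, map_prod]
  exact Finset.prod_congr rfl fun s _ => map_qint_of_map_vv hv A i (s + 1)

lemma map_Fdiv_coeff_of_map_vv (hv : barK vv = vv⁻¹) (A : CartanDatum I) (i : I) (n : ℕ) :
    barK ((sqi A i * (1 - qi A i ^ 2)⁻¹) ^ n / qfact (qi A i) n)
      = (-qi A i) ^ n * ((sqi A i * (1 - qi A i ^ 2)⁻¹) ^ n / qfact (qi A i) n) := by
  have hs : sqi A i ≠ 0 := zpow_ne_zero _ vv_ne_zero
  have key : barK (sqi A i * (1 - qi A i ^ 2)⁻¹)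
      = -qi A i * (sqi A i * (1 - qi A i ^ 2)⁻¹) := by
    have h : (1 : kk) - ((sqi A i ^ 2)⁻¹) ^ 2
        = -((sqi A i ^ 4)⁻¹ * (1 - (sqi A i ^ 2) ^ 2)) := by
      field_simp; ring
    rw [map_mul, map_inv₀, map_sub, map_one, map_pow, map_qi_of_map_vv hv,
      map_sqi_of_map_vv hv, qi_eq_sqi_sq, h]
    rw [inv_neg, mul_inv, inv_inv]
    field_simp
  rw [map_div₀, map_pow, map_qfact_of_map_vv hv, key, mul_pow, mul_div_assoc]

end Scalars

lemma adjoin_range_fgen (A : CartanDatum I) :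
    Algebra.adjoin kk (Set.range fun p : I × ℤ => fgen A p.1 p.2) = ⊤ := by
  have h := AlgHom.map_adjoin (RingQuot.mkAlgHom kk (AhatRel A))
    (Set.range (FreeAlgebra.ι kk (X := I × ℤ)))
  rw [FreeAlgebra.adjoin_range_ι, ← Set.range_comp, Algebra.map_top,
    (AlgHom.range_eq_top _).mpr (RingQuot.mkAlgHom_surjective _ _)] at h
  exact h.symm

/-- Taking `μ = (· * ·)` or `μ = fun x y => y * x` covers both multiplicative and
anti-multiplicative maps. -/
lemma semilinearMap_ext_of_fgen {A : CartanDatum I} {σ : kk →+* kk}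
    (μ : Ahat A → Ahat A → Ahat A) (f g : Ahat A →ₛₗ[σ] Ahat A)
    (hf : ∀ x y, f (x * y) = μ (f x) (f y)) (hg : ∀ x y, g (x * y) = μ (g x) (g y))
    (h1 : f 1 = g 1) (hgen : ∀ j m, f (fgen A j m) = g (fgen A j m)) : f = g := by
  ext x
  have hx : x ∈ Algebra.adjoin kk (Set.range fun p : I × ℤ => fgen A p.1 p.2) := by
    rw [adjoin_range_fgen]; trivial
  induction hx using Algebra.adjoin_induction with
  | mem y hy => obtain ⟨p, rfl⟩ := hy; exact hgen p.1 p.2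
  | algebraMap r => rw [Algebra.algebraMap_eq_smul_one, f.map_smulₛₗ, g.map_smulₛₗ, h1]
  | add x y _ _ hx hy => rw [map_add, map_add, hx, hy]
  | mul x y _ _ hx hy => rw [hf, hg, hx, hy]

lemma fgen_mem_subOf (A : CartanDatum I) {P : ℤ → Prop} (j : I) {m : ℤ} (hm : P m) :
    fgen A j m ∈ subOf A P :=
  Algebra.subset_adjoin ⟨j, m, hm, rfl⟩

lemma map_mem_subOf {A : CartanDatum I} {P Q : ℤ → Prop} (f : Ahat A →ₐ[kk] Ahat A)
    (hgen : ∀ j m, P m → f (fgen A j m) ∈ subOf A Q) {x : Ahat A} (hx : x ∈ subOf A P) :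
    f x ∈ subOf A Q :=
  Algebra.adjoin_le (S := (subOf A Q).comap f)
    (by rintro _ ⟨j, m, hm, rfl⟩; exact hgen j m hm) hx

section Weights

open Matrix

lemma wtList_nil {J : Type} [DecidableEq J] : wtList ([] : List (J × ℤ)) = 0 := by
  funext j; simp [wtList]

lemma wtList_append {J : Type} [DecidableEq J] (L₁ L₂ : List (J × ℤ)) :
    wtList (L₁ ++ L₂) = wtList L₁ + wtList L₂ := by
  funext j; simp [wtList]

lemma wtList_singleton {J : Type} [DecidableEq J] (j : J) (m : ℤ) :
    wtList [(j, m)] = (-(-1 : ℤ) ^ m.natAbs) • alphaF j := by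
  funext l; simp [wtList, alphaF, eq_comm]

def siRefHom (A : CartanDatum I) (i : I) : (I → ℤ) →+ (I → ℤ) where
  toFun := siRef A i
  map_zero' := by funext j; simp [siRef]
  map_add' β γ := by
    funext j
    simp only [siRef, Pi.add_apply, add_mul, Finset.sum_add_distrib]
    ring

lemma siRefHom_apply (A : CartanDatum I) (i : I) (β : I → ℤ) :
    siRefHom A i β = siRef A i β :=
  rfl

lemma siRef_alphaF (A : CartanDatum I) (i j : I) :
    siRef A i (alphaF j) = alphaF j - A.c i j • alphaF i := by
  funext l
  simp [siRef, alphaF, Finset.sum_ite_eq']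

lemma siRef_wtList_self (A : CartanDatum I) (i : I) (m : ℤ) :
    siRef A i (wtList [(i, m)]) = wtList [(i, m + 1)] := by
  have hsign : (-1 : ℤ) ^ (m + 1).natAbs = -(-1 : ℤ) ^ m.natAbs := by
    rw [← Int.coe_negOnePow, ← Int.coe_negOnePow, Int.negOnePow_succ]
    simp
  rw [wtList_singleton, wtList_singleton, ← siRefHom_apply, map_zsmul, siRefHom_apply,
    siRef_alphaF, A.c_diag, hsign]
  module

lemma siRef_wtList_of_ne (A : CartanDatum I) {i j : I} (hij : j ≠ i) (m : ℤ) :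
    siRef A i (wtList [(j, m)]) = wtList [(j, m)] + (-A.c i j).toNat • wtList [(i, m)] := by
  have hc : ((-A.c i j).toNat : ℤ) = -A.c i j := Int.toNat_of_nonneg (by
    linarith [A.c_offdiag i j (Ne.symm hij)])
  rw [wtList_singleton, wtList_singleton, ← siRefHom_apply, map_zsmul, siRefHom_apply,
    siRef_alphaF, ← natCast_zsmul, hc]
  module

lemma form_eq_dotProduct (A : CartanDatum I) (α β : I → ℤ) :
    A.form α β = α ⬝ᵥ (of (fun i j => A.d i * A.c i j) *ᵥ β) := by
  simp [CartanDatum.form, dotProduct, mulVec, Finset.mul_sum, mul_assoc]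

lemma form_siRef (A : CartanDatum I) (i : I) (β : I → ℤ) :
    A.form (siRef A i β) (siRef A i β) = A.form β β := by
  set t := ∑ l, β l * A.c i l
  have hsi : siRef A i β = β - t • alphaF i := by
    funext j; simp [siRef, alphaF, t]
  rw [form_eq_dotProduct, form_eq_dotProduct, hsi]
  set M : Matrix I I ℤ := of fun i j => A.d i * A.c i j
  have hαβ : alphaF i ⬝ᵥ (M *ᵥ β) = A.d i * t := by
    simp [M, t, alphaF, dotProduct, mulVec, Finset.mul_sum, mul_assoc, mul_comm]
  have hβα : β ⬝ᵥ (M *ᵥ alphaF i) = A.d i * t := by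
    simp only [M, t, alphaF, dotProduct, mulVec, of_apply, mul_ite, mul_one, mul_zero,
      Finset.sum_ite_eq', Finset.mem_univ, if_true, Finset.mul_sum]
    exact Finset.sum_congr rfl fun l _ => by rw [← A.symm]; ring
  have hαα : alphaF i ⬝ᵥ (M *ᵥ alphaF i) = 2 * A.d i := by
    simp [M, alphaF, dotProduct, mulVec, A.c_diag, mul_comm]
  simp only [mulVec_sub, mulVec_smul, dotProduct_sub, sub_dotProduct, dotProduct_smul,
    smul_dotProduct, hαβ, hβα, hαα, smul_eq_mul]
  ring

end Weights

section WeightSpaces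

variable {A : CartanDatum I}

lemma monomial_mem_wtSpace (A : CartanDatum I) (L : List (I × ℤ)) :
    (L.map fun p => fgen A p.1 p.2).prod ∈ wtSpace A (wtList L) :=
  Submodule.subset_span ⟨L, rfl, rfl⟩

lemma one_mem_wtSpace (A : CartanDatum I) : (1 : Ahat A) ∈ wtSpace A 0 := by
  simpa only [wtList_nil, List.map_nil, List.prod_nil] using monomial_mem_wtSpace A []

lemma fgen_mem_wtSpace (A : CartanDatum I) (j : I) (m : ℤ) :
    fgen A j m ∈ wtSpace A (wtList [(j, m)]) := by
  simpa using monomial_mem_wtSpace A [(j, m)]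

lemma mul_mem_wtSpace {x y : Ahat A} {β γ : I → ℤ} (hx : x ∈ wtSpace A β)
    (hy : y ∈ wtSpace A γ) : x * y ∈ wtSpace A (β + γ) := by
  have h : wtSpace A β * wtSpace A γ ≤ wtSpace A (β + γ) := by
    rw [wtSpace, wtSpace, Submodule.span_mul_span, Submodule.span_le]
    rintro _ ⟨_, ⟨L₁, rfl, rfl⟩, _, ⟨L₂, rfl, rfl⟩, rfl⟩
    exact Submodule.subset_span ⟨L₁ ++ L₂, wtList_append L₁ L₂, by simp⟩
  exact h (Submodule.mul_mem_mul hx hy)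

lemma pow_mem_wtSpace {x : Ahat A} {β : I → ℤ} (hx : x ∈ wtSpace A β) (n : ℕ) :
    x ^ n ∈ wtSpace A (n • β) := by
  induction n with
  | zero => rw [pow_zero, zero_nsmul]; exact one_mem_wtSpace A
  | succ n ih => rw [pow_succ, succ_nsmul]; exact mul_mem_wtSpace ih hx

lemma iSup_wtSpace (A : CartanDatum I) : ⨆ β, wtSpace A β = ⊤ := by
  refine eq_top_iff.mpr fun x _ => ?_
  have hx : x ∈ Subalgebra.toSubmodule
      (Algebra.adjoin kk (Set.range fun p : I × ℤ => fgen A p.1 p.2)) := by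
    rw [adjoin_range_fgen]; trivial
  rw [Algebra.adjoin_eq_span] at hx
  refine Submodule.span_le.mpr (fun y hy => ?_) hx
  obtain ⟨L, rfl⟩ : ∃ L : List (I × ℤ), y = (L.map fun p => fgen A p.1 p.2).prod := by
    induction hy using Submonoid.closure_induction with
    | mem y hy => obtain ⟨p, rfl⟩ := hy; exact ⟨[p], by simp⟩
    | one => exact ⟨[], rfl⟩
    | mul y z _ _ hy hz =>
      obtain ⟨L₁, rfl⟩ := hy
      obtain ⟨L₂, rfl⟩ := hz
      exact ⟨L₁ ++ L₂, by simp⟩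
  exact Submodule.mem_iSup_of_mem _ (monomial_mem_wtSpace A L)

lemma addMonoidHom_ext_of_wtSpace {B : Type*} [AddCommMonoid B] (f g : Ahat A →+ B)
    (h : ∀ β, ∀ x ∈ wtSpace A β, f x = g x) : f = g := by
  ext x
  have hx : x ∈ ⨆ β, wtSpace A β := by rw [iSup_wtSpace]; trivial
  refine Submodule.iSup_induction _ (motive := fun x => f x = g x) hx h
    (by rw [map_zero, map_zero]) fun x y hx hy => ?_
  rw [map_add, map_add, hx, hy]

lemma map_mem_wtSpace (f : Ahat A →ₐ[kk] Ahat A) (w : (I → ℤ) →+ (I → ℤ))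
    (hgen : ∀ j m, f (fgen A j m) ∈ wtSpace A (w (wtList [(j, m)]))) {β : I → ℤ}
    {x : Ahat A} (hx : x ∈ wtSpace A β) : f x ∈ wtSpace A (w β) := by
  induction hx using Submodule.span_induction with
  | mem y hy =>
    obtain ⟨L, rfl, rfl⟩ := hy
    induction L with
    | nil => simpa only [List.map_nil, List.prod_nil, map_one, wtList_nil, map_zero]
        using one_mem_wtSpace A
    | cons p L ih =>
      rw [List.map_cons, List.prod_cons, map_mul, ← List.singleton_append, wtList_append,
        map_add]
      exact mul_mem_wtSpace (hgen p.1 p.2) ih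
  | zero => simp
  | add x y _ _ hx hy => rw [map_add]; exact add_mem hx hy
  | smul a x _ hx => rw [map_smul]; exact Submodule.smul_mem _ a hx

end WeightSpaces

lemma map_pow_of_map_mul_rev {M N : Type*} [Monoid M] [Monoid N] {f : M → N}
    (hmul : ∀ x y, f (x * y) = f y * f x) (h1 : f 1 = 1) (x : M) (n : ℕ) :
    f (x ^ n) = f x ^ n := by
  induction n with
  | zero => rw [pow_zero, pow_zero, h1]
  | succ n ih => rw [pow_succ, hmul, ih, ← pow_succ']

section Generators

variable {A : CartanDatum I} {i : I}

lemma map_Fdiv_of_map_fgen {F : Type*} [FunLike F (Ahat A) (Ahat A)]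
    [AlgHomClass F kk (Ahat A) (Ahat A)] (f : F) {m m' : ℤ} (h : f (fgen A i m) = fgen A i m')
    (n : ℕ) : f (Fdiv A i m n) = Fdiv A i m' n := by
  rw [Fdiv, Fdiv, map_smul, map_pow, h]

lemma Fdiv_mem_subalgebra {B : Subalgebra kk (Ahat A)} {m : ℤ} (hi : fgen A i m ∈ B) (n : ℕ) :
    Fdiv A i m n ∈ B :=
  Subalgebra.smul_mem _ (pow_mem hi n) _

lemma Fdiv_mem_wtSpace (A : CartanDatum I) (i : I) (m : ℤ) (n : ℕ) :
    Fdiv A i m n ∈ wtSpace A (n • wtList [(i, m)]) :=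
  Submodule.smul_mem _ _ (pow_mem_wtSpace (fgen_mem_wtSpace A i m) n)

lemma braid_sum_mem_subalgebra {B : Subalgebra kk (Ahat A)} {j : I} {m : ℤ}
    (hi : fgen A i m ∈ B) (hj : fgen A j m ∈ B) (c : ℕ → kk) (n : ℕ) :
    ∑ r ∈ Finset.range (n + 1), c r • (Fdiv A i m r * fgen A j m * Fdiv A i m (n - r))
      ∈ B :=
  Subalgebra.sum_mem _ fun r _ => Subalgebra.smul_mem _
    (mul_mem (mul_mem (Fdiv_mem_subalgebra hi r) hj) (Fdiv_mem_subalgebra hi _)) _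

lemma braid_sum_mem_wtSpace {j : I} (m : ℤ) (c : ℕ → kk) (n : ℕ) :
    ∑ r ∈ Finset.range (n + 1), c r • (Fdiv A i m r * fgen A j m * Fdiv A i m (n - r))
      ∈ wtSpace A (wtList [(j, m)] + n • wtList [(i, m)]) := by
  refine Submodule.sum_mem _ fun r hr => Submodule.smul_mem _ _ ?_
  have hrn : r ≤ n := Nat.lt_succ_iff.mp (Finset.mem_range.mp hr)
  have hwt : r • wtList [(i, m)] + wtList [(j, m)] + (n - r) • wtList [(i, m)]
      = wtList [(j, m)] + n • wtList [(i, m)] := by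
    rw [add_right_comm, ← add_nsmul, Nat.add_sub_cancel' hrn, add_comm]
  rw [← hwt]
  exact mul_mem_wtSpace (mul_mem_wtSpace (Fdiv_mem_wtSpace A i m r) (fgen_mem_wtSpace A j m))
    (Fdiv_mem_wtSpace A i m _)

end Generators

namespace IsStar

variable {A : CartanDatum I} {S : Ahat A → Ahat A}

def toLinearMap (hS : IsStar A S) : Ahat A →ₗ[kk] Ahat A where
  toFun := S
  map_add' := hS.map_add
  map_smul' := hS.map_smul

lemma toLinearMap_apply (hS : IsStar A S) (x : Ahat A) : hS.toLinearMap x = S x :=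
  rfl

lemma map_Fdiv (hS : IsStar A S) (i : I) (m : ℤ) (n : ℕ) :
    S (Fdiv A i m n) = Fdiv A i (-m) n := by
  rw [Fdiv, Fdiv, hS.map_smul, map_pow_of_map_mul_rev hS.map_mul hS.map_one, hS.map_gen]

end IsStar

namespace IsBar

variable {A : CartanDatum I} {barK : kk →+* kk} {bb : Ahat A → Ahat A}

lemma map_one (hbar : IsBar A barK bb) : bb 1 = 1 := by
  obtain ⟨y, hy⟩ := hbar.bij.2 1
  simpa [hy] using (hbar.map_mul y 1).symm

def toSemilinearMap (hbar : IsBar A barK bb) : Ahat A →ₛₗ[barK] Ahat A where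
  toFun := bb
  map_add' := hbar.map_add
  map_smul' := hbar.map_smul

lemma toSemilinearMap_apply (hbar : IsBar A barK bb) (x : Ahat A) :
    hbar.toSemilinearMap x = bb x :=
  rfl

lemma map_Fdiv (hbar : IsBar A barK bb) (i : I) (m : ℤ) (n : ℕ) :
    bb (Fdiv A i m n) = (-qi A i) ^ n • Fdiv A i m n := by
  rw [Fdiv, hbar.map_smul, map_pow_of_map_mul_rev hbar.map_mul hbar.map_one, hbar.map_gen,
    map_Fdiv_coeff_of_map_vv hbar.barK_v, mul_smul]

end IsBar

namespace IsBraidT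

variable {A : CartanDatum I} {i : I} {T : Ahat A ≃ₐ[kk] Ahat A}

lemma map_fgen_mem_wtSpace (hT : IsBraidT A i T) (j : I) (m : ℤ) :
    T (fgen A j m) ∈ wtSpace A (siRef A i (wtList [(j, m)])) := by
  by_cases hj : j = i
  · subst hj
    rw [hT.1 m, siRef_wtList_self]
    exact fgen_mem_wtSpace A j (m + 1)
  · rw [hT.2 j hj m, siRef_wtList_of_ne A hj]
    exact braid_sum_mem_wtSpace m _ _

lemma map_mem_wtSpace (hT : IsBraidT A i T) {β : I → ℤ} {x : Ahat A}
    (hx : x ∈ wtSpace A β) : T x ∈ wtSpace A (siRef A i β) :=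
  _root_.map_mem_wtSpace T.toAlgHom (siRefHom A i) hT.map_fgen_mem_wtSpace hx

lemma map_mem_subAB (hT : IsBraidT A i T) {a b : ℤ} {x : Ahat A} (hx : x ∈ subAB A a b) :
    T x ∈ subAB A a (b + 1) := by
  refine map_mem_subOf T.toAlgHom (fun j m hm => ?_) hx
  have hmem : ∀ l, fgen A l m ∈ subAB A a (b + 1) := fun l =>
    fgen_mem_subOf A l ⟨hm.1, by omega⟩
  by_cases hj : j = i
  · subst hj
    exact (hT.1 m).symm ▸ fgen_mem_subOf A j ⟨by omega, by omega⟩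
  · exact (hT.2 j hj m).symm ▸ braid_sum_mem_subalgebra (hmem i) (hmem j) _ _

lemma commute_Dbar {D : Ahat A ≃ₐ[kk] Ahat A} (hT : IsBraidT A i T) (hD : IsDbar A D)
    (x : Ahat A) : D (T x) = T (D x) := by
  have hgen : ∀ j m, D (T (fgen A j m)) = T (D (fgen A j m)) := by
    intro j m
    by_cases hj : j = i
    · subst hj
      rw [hT.1, hD, hD, hT.1]
    · rw [hD j m, hT.2 j hj m, hT.2 j hj (m + 1), map_sum]
      refine Finset.sum_congr rfl fun r _ => ?_
      rw [map_smul, map_mul, map_mul, hD, map_Fdiv_of_map_fgen D (hD i m),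
        map_Fdiv_of_map_fgen D (hD i m)]
  have := semilinearMap_ext_of_fgen (· * ·)
    (D.toLinearMap ∘ₗ T.toLinearMap) (T.toLinearMap ∘ₗ D.toLinearMap)
    (fun _ _ => by simp) (fun _ _ => by simp) (by simp) hgen
  exact LinearMap.congr_fun this x

lemma commute_bar {barK : kk →+* kk} {bb : Ahat A → Ahat A} (hT : IsBraidT A i T)
    (hbar : IsBar A barK bb) (x : Ahat A) : T (bb x) = bb (T x) := by
  have hgen : ∀ j m, T (bb (fgen A j m)) = bb (T (fgen A j m)) := by
    intro j m
    rw [hbar.map_gen]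
    by_cases hj : j = i
    · subst hj
      rw [hT.1, hbar.map_gen]
    -- after reindexing `r ↦ n - r`, both sides have coefficient `(-q_i)^r`
    rw [hT.2 j hj m, ← hbar.toSemilinearMap_apply, map_sum, ← Finset.sum_range_reflect]
    set n := (-A.c i j).toNat
    refine Finset.sum_congr rfl fun r hr => ?_
    have hrn : r ≤ n := Nat.lt_succ_iff.mp (Finset.mem_range.mp hr)
    have hq : (-(qi A i)⁻¹) ^ (n - r) * (-qi A i) ^ (n - r) = 1 := by
      rw [← mul_pow, neg_mul_neg, inv_mul_cancel₀ (qi_ne_zero A i), one_pow]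
    rw [hbar.toSemilinearMap_apply, hbar.map_smul, hbar.map_mul, hbar.map_mul, hbar.map_gen,
      hbar.map_Fdiv, hbar.map_Fdiv, Nat.add_sub_cancel, Nat.sub_sub_self hrn, map_pow, map_neg,
      map_qi_of_map_vv hbar.barK_v, smul_mul_assoc, mul_smul_comm, mul_smul_comm, smul_smul,
      smul_smul, ← mul_assoc, hq, one_mul, mul_assoc]
  have := semilinearMap_ext_of_fgen (fun x y => y * x)
    (T.toLinearMap.comp hbar.toSemilinearMap) (hbar.toSemilinearMap.comp T.toLinearMap)
    (fun _ _ => by simp [IsBar.toSemilinearMap, hbar.map_mul])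
    (fun _ _ => by simp [IsBar.toSemilinearMap, hbar.map_mul])
    (by simp [IsBar.toSemilinearMap, hbar.map_one]) hgen
  exact LinearMap.congr_fun this x

lemma commute_c {barK : kk →+* kk} {bb cc : Ahat A → Ahat A} (hT : IsBraidT A i T)
    (hbar : IsBar A barK bb) (hc : IsC A bb cc) (x : Ahat A) : T (cc x) = cc (T x) := by
  let c : Ahat A →+ Ahat A := AddMonoidHom.mk' cc hc.map_add
  have := addMonoidHom_ext_of_wtSpace (T.toAddMonoidHom.comp c) (c.comp T.toAddMonoidHom)
    fun β y hy => by
      show T (cc y) = cc (T y)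
      rw [hc.homog β y hy, map_smul, hT.commute_bar hbar, hc.homog _ _ (hT.map_mem_wtSpace hy),
        form_siRef]
  exact DFunLike.congr_fun this x

end IsBraidT

namespace IsBraidTStar

variable {A : CartanDatum I} {i : I} {Ts : Ahat A ≃ₐ[kk] Ahat A}

lemma map_mem_subAB (hTs : IsBraidTStar A i Ts) {a b : ℤ} {x : Ahat A}
    (hx : x ∈ subAB A a b) : Ts x ∈ subAB A (a - 1) b := by
  refine map_mem_subOf Ts.toAlgHom (fun j m hm => ?_) hx
  have hmem : ∀ l, fgen A l m ∈ subAB A (a - 1) b := fun l =>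
    fgen_mem_subOf A l ⟨by omega, hm.2⟩
  by_cases hj : j = i
  · subst hj
    exact (hTs.1 m).symm ▸ fgen_mem_subOf A j ⟨by omega, by omega⟩
  · exact (hTs.2 j hj m).symm ▸ braid_sum_mem_subalgebra (hmem i) (hmem j) _ _

lemma eq_star_conj {T : Ahat A ≃ₐ[kk] Ahat A} {S : Ahat A → Ahat A}
    (hTs : IsBraidTStar A i Ts) (hT : IsBraidT A i T) (hS : IsStar A S) (x : Ahat A) :
    Ts x = S (T (S x)) := by
  have hgen : ∀ j m, Ts (fgen A j m) = S (T (S (fgen A j m))) := by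
    intro j m
    rw [hS.map_gen]
    by_cases hj : j = i
    · subst hj
      rw [hTs.1, hT.1, hS.map_gen, neg_add, neg_neg, ← sub_eq_add_neg]
    rw [hTs.2 j hj m, hT.2 j hj (-m), ← hS.toLinearMap_apply, map_sum,
      ← Finset.sum_range_reflect]
    refine Finset.sum_congr rfl fun r hr => ?_
    have hrn : r ≤ (-A.c i j).toNat := Nat.lt_succ_iff.mp (Finset.mem_range.mp hr)
    rw [hS.toLinearMap_apply, hS.map_smul, hS.map_mul, hS.map_mul, hS.map_gen, hS.map_Fdiv,
      hS.map_Fdiv, neg_neg, Nat.add_sub_cancel, Nat.sub_sub_self hrn, mul_assoc]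
  have := semilinearMap_ext_of_fgen (· * ·) Ts.toLinearMap
    (hS.toLinearMap ∘ₗ T.toLinearMap ∘ₗ hS.toLinearMap) (fun _ _ => by simp)
    (fun _ _ => by simp [IsStar.toLinearMap_apply, hS.map_mul])
    (by simp [IsStar.toLinearMap_apply, hS.map_one]) hgen
  exact LinearMap.congr_fun this x

end IsBraidTStar

/-- Properties of the braid symmetry `T_i`:
(i) `D̄ ∘ T_i = T_i ∘ D̄`; (ii) `T_i^⋆ = ⋆ ∘ T_i ∘ ⋆`; (iii) `T_i` commutes with the bar
involution; (iv) `T_i` commutes with `c`; (v) `wt(T_i x) = s_i (wt x)` for homogeneous `x`;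
(vi) `T_i(Â[a,b]) ⊆ Â[a,b+1]` and `T_i^⋆(Â[a,b]) ⊆ Â[a-1,b]` for all `a ≤ b`. -/
theorem statement3 {I : Type} [Fintype I] [DecidableEq I] (A : CartanDatum I) (i : I)
    (T Ts D : Ahat A ≃ₐ[kk] Ahat A) (S bb cc : Ahat A → Ahat A) (barK : kk →+* kk)
    (hT : IsBraidT A i T) (hTs : IsBraidTStar A i Ts) (hD : IsDbar A D)
    (hS : IsStar A S) (hbar : IsBar A barK bb) (hc : IsC A bb cc) :
    (∀ x, D (T x) = T (D x)) ∧
    (∀ x, Ts x = S (T (S x))) ∧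
    (∀ x, T (bb x) = bb (T x)) ∧
    (∀ x, T (cc x) = cc (T x)) ∧
    (∀ (β : I → ℤ), ∀ x ∈ wtSpace A β, T x ∈ wtSpace A (siRef A i β)) ∧
    (∀ a b : ℤ, a ≤ b → ∀ x ∈ subAB A a b,
      T x ∈ subAB A a (b + 1) ∧ Ts x ∈ subAB A (a - 1) b) :=
  ⟨hT.commute_Dbar hD, hTs.eq_star_conj hT hS, hT.commute_bar hbar, hT.commute_c hbar hc,
    fun _ _ hx => hT.map_mem_wtSpace hx,
    fun _ _ _ _ hx => ⟨hT.map_mem_subAB hx, hTs.map_mem_subAB hx⟩⟩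
end
end

section
/- For every i ∈ I and every x ∈ Â, one has M(T_i(x)) = M(x), where M: Â → k is the projection onto the degree-zero component of the triangular decomposition of Â. -/
noncomputable section
open scoped Classical
open Finset

variable {I : Type} [Fintype I] [DecidableEq I]

/-!
Both `M ∘ T_i` and `M` are linear, so it suffices to compare them on monomials `f_u`, `u` a word
in the letters `(j, m)`. A `q`-boson relation rewrites a monomial with an ascent
`(x, y)`, `x.2 < y.2`, as a multiple of the monomial with `x, y` swapped plus, only if
`y = (x.1, x.2 + 1)`, a multiple of the monomial with `x, y` deleted; inducting on
(length, number of inversions) reduces everything to ordered words, i.e. with levels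
non-increasing. These are products of homogeneous pieces of the triangular decomposition, so `M`
kills them unless `u = []`.

For ordered `u ≠ []`, `T_i(f_u)` is an explicit combination of monomials `f_v`. If `u` has a letter
`(j, m)` with `j ≠ i`, then so does every `v`, and `v` has no letter `(j, m)` followed later by
`(j, m + 1)` with `j ≠ i`. This property survives swaps, and it forces every deletion to remove a
pair `(i, m), (i, m + 1)`; hence every ordered word reached by straightening `v` still has a letter
`j ≠ i`, and `M(f_v) = 0`. If all letters of `u` are `i`, then `T_i(f_u)` is again an ordered
monomial.
-/

namespace BosonicExtension

open List

section Words

variable {α : Type*}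

def IsOrdered (u : List (α × ℤ)) : Prop := u.Pairwise (fun x y => y.2 ≤ x.2)

def inversions : List (α × ℤ) → ℕ
  | [] => 0
  | x :: t => t.countP (fun y => x.2 < y.2) + inversions t

theorem inversions_swap (v₁ v₂ : List (α × ℤ)) {x y : α × ℤ} (h : x.2 < y.2) :
    inversions (v₁ ++ x :: y :: v₂) = inversions (v₁ ++ y :: x :: v₂) + 1 := by
  induction v₁ with
  | nil =>
    simp only [nil_append, inversions, h, lt_asymm h, decide_true, decide_false,
      Bool.false_eq_true, not_false_eq_true, countP_cons_of_pos, countP_cons_of_neg]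
    omega
  | cons z v₁ ih =>
    simp only [cons_append, inversions, ih, ((Perm.swap y x v₂).append_left v₁).countP_eq]
    omega

theorem isOrdered_or_exists_ascent (u : List (α × ℤ)) :
    IsOrdered u ∨ ∃ v₁ x y v₂, u = v₁ ++ x :: y :: v₂ ∧ x.2 < y.2 := by
  induction u with
  | nil => exact Or.inl Pairwise.nil
  | cons x t ih =>
    rcases ih with ht | ⟨v₁, a, b, v₂, rfl, hab⟩
    · cases t with
      | nil => exact Or.inl (pairwise_singleton _ x)
      | cons y t =>
        by_cases hxy : x.2 < y.2
        · exact Or.inr ⟨[], x, y, t, rfl, hxy⟩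
        · refine Or.inl (List.pairwise_cons.mpr ⟨fun z hz => ?_, ht⟩)
          rcases List.mem_cons.mp hz with rfl | hz
          · exact not_lt.mp hxy
          · exact (List.pairwise_cons.mp ht).1 z hz |>.trans (not_lt.mp hxy)
    · exact Or.inr ⟨x :: v₁, a, b, v₂, rfl, hab⟩

theorem IsOrdered.filter_append_filter {u : List (α × ℤ)} (hu : IsOrdered u) {b : ℤ}
    (hb : ∀ x ∈ u, x.2 ≤ b) : u.filter (·.2 = b) ++ u.filter (·.2 ≠ b) = u := by
  induction u with
  | nil => rfl
  | cons x t ih =>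
    obtain ⟨hxt, ht⟩ := List.pairwise_cons.mp hu
    have htb : ∀ z ∈ t, z.2 ≤ b := fun z hz => hb z (mem_cons_of_mem x hz)
    by_cases hx : x.2 = b
    · simpa [hx] using ih ht htb
    · have hlt : ∀ z ∈ t, z.2 < b := fun z hz => (hxt z hz).trans_lt
        (lt_of_le_of_ne (hb x mem_cons_self) hx)
      rw [List.filter_eq_nil_iff.mpr, List.filter_eq_self.mpr] <;> grind

theorem wtList_apply_of_forall_snd_eq {J : Type} [DecidableEq J] {u : List (J × ℤ)} {k : ℤ}
    (h : ∀ x ∈ u, x.2 = k) (j : J) :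
    wtList u j = -(-1) ^ k.natAbs * (u.countP (·.1 = j) : ℤ) := by
  induction u with
  | nil => simp [wtList]
  | cons x t ih =>
    rw [List.forall_mem_cons] at h
    have ih := ih h.2
    simp only [wtList, List.map_cons, List.sum_cons, countP_cons] at ih ⊢
    rw [ih, h.1]
    by_cases hx : x.1 = j
    · simp only [hx, if_true, decide_true]
      push_cast
      ring
    · simp [hx]

theorem wtList_ne_zero_of_forall_snd_eq {J : Type} [DecidableEq J] {u : List (J × ℤ)} {k : ℤ}
    (h : ∀ x ∈ u, x.2 = k) (hne : u ≠ []) : wtList u ≠ 0 := by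
  obtain ⟨x, hx⟩ := exists_mem_of_ne_nil u hne
  have hcount : 0 < u.countP (·.1 = x.1) := countP_pos_iff.mpr ⟨x, hx, by simp⟩
  intro h0
  have hx0 := congrFun h0 x.1
  rw [wtList_apply_of_forall_snd_eq h] at hx0
  rcases mul_eq_zero.mp hx0 with hs | hc
  · simp at hs
  · omega

def NoRaisingPair (i : α) (u : List (α × ℤ)) : Prop :=
  u.Pairwise (fun p q => p.1 ≠ i → q.1 = p.1 → q.2 ≠ p.2 + 1)

theorem NoRaisingPair.swap {i : α} {v₁ v₂ : List (α × ℤ)} {x y : α × ℤ} (h : x.2 < y.2)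
    (hu : NoRaisingPair i (v₁ ++ x :: y :: v₂)) : NoRaisingPair i (v₁ ++ y :: x :: v₂) := by
  simp only [NoRaisingPair, pairwise_append, List.pairwise_cons, List.mem_cons] at hu ⊢
  grind

theorem NoRaisingPair.delete {i : α} {v₁ v₂ : List (α × ℤ)} {x y : α × ℤ}
    (hu : NoRaisingPair i (v₁ ++ x :: y :: v₂)) : NoRaisingPair i (v₁ ++ v₂) :=
  Pairwise.sublist ((Sublist.refl v₁).append ((sublist_cons_self y v₂).trans
    (sublist_cons_self x _))) hu

/-- The words `u` whose monomials occur in `T_i(f_w)`: each letter `(j, m)` of `w` with `j ≠ i`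
becomes `(i, m)^r (j, m) (i, m)^s`, and each letter `(i, m)` becomes `(i, m + 1)`. -/
inductive IsExpansion (i : α) : List (α × ℤ) → List (α × ℤ) → Prop
  | nil : IsExpansion i [] []
  | self (m : ℤ) {w u : List (α × ℤ)} : IsExpansion i w u →
      IsExpansion i ((i, m) :: w) ((i, m + 1) :: u)
  | other {j : α} (m : ℤ) (r s : ℕ) {w u : List (α × ℤ)} : j ≠ i → IsExpansion i w u →
      IsExpansion i ((j, m) :: w) (replicate r (i, m) ++ (j, m) :: (replicate s (i, m) ++ u))

namespace IsExpansion

variable {i : α} {w u : List (α × ℤ)}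

theorem snd_le (h : IsExpansion i w u) {m : ℤ} (hw : ∀ z ∈ w, z.2 ≤ m) :
    ∀ z ∈ u, z.1 ≠ i → z.2 ≤ m := by
  induction h with
  | nil => simp
  | self k _ ih => grind
  | other k r s hj _ ih =>
    intro z hz hzi
    simp only [List.mem_append, List.mem_cons, List.mem_replicate] at hz
    grind

theorem noRaisingPair (h : IsExpansion i w u) (hw : IsOrdered w) : NoRaisingPair i u := by
  induction h with
  | nil => exact Pairwise.nil
  | self k _ ih => exact List.pairwise_cons.mpr ⟨by simp, ih (List.pairwise_cons.mp hw).2⟩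
  | other k r s hj he ih =>
    obtain ⟨hkw, hw⟩ := List.pairwise_cons.mp hw
    have hlev := he.snd_le hkw
    simp only [NoRaisingPair, pairwise_append, List.pairwise_cons, pairwise_replicate,
      List.mem_append, List.mem_cons, List.mem_replicate]
    refine ⟨by simp, ⟨fun z hz _ hzj => ?_, by simp, ih hw, by simp⟩, by simp⟩
    rcases hz with ⟨-, rfl⟩ | hz
    · exact absurd hzj.symm hj
    · have := hlev z hz (hzj ▸ hj)
      omega

theorem exists_fst_ne (h : IsExpansion i w u) (hw : ∃ z ∈ w, z.1 ≠ i) : ∃ z ∈ u, z.1 ≠ i := by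
  induction h with
  | nil => simp at hw
  | self k _ ih =>
    obtain ⟨z, hz, hzi⟩ := hw
    obtain ⟨z', hz', hz'i⟩ := ih ⟨z, (List.mem_cons.mp hz).resolve_left (by grind), hzi⟩
    exact ⟨z', mem_cons_of_mem _ hz', hz'i⟩
  | @other j k r s _ _ hj _ _ => exact ⟨(j, k), by simp, hj⟩

end IsExpansion

end Words

section Monomials

variable (A : CartanDatum I)

def wordProd (u : List (I × ℤ)) : Ahat A := (u.map fun p => fgen A p.1 p.2).prod

@[simp]
theorem wordProd_nil : wordProd A [] = 1 := rfl

@[simp]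
theorem wordProd_cons (x : I × ℤ) (u : List (I × ℤ)) :
    wordProd A (x :: u) = fgen A x.1 x.2 * wordProd A u := by
  simp [wordProd]

@[simp]
theorem wordProd_append (u v : List (I × ℤ)) :
    wordProd A (u ++ v) = wordProd A u * wordProd A v := by
  simp [wordProd]

@[simp]
theorem wordProd_replicate (n : ℕ) (p : I × ℤ) :
    wordProd A (replicate n p) = fgen A p.1 p.2 ^ n := by
  simp [wordProd]

theorem span_range_wordProd : Submodule.span kk (Set.range (wordProd A)) = ⊤ := by
  set N := Submodule.span kk (Set.range (wordProd A))
  have hmul : N * N ≤ N := by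
    rw [Submodule.span_mul_span]
    refine Submodule.span_le.mpr ?_
    rintro _ ⟨_, ⟨u, rfl⟩, _, ⟨v, rfl⟩, rfl⟩
    exact Submodule.subset_span ⟨u ++ v, wordProd_append A u v⟩
  refine Submodule.eq_top_iff'.mpr fun x => ?_
  obtain ⟨y, rfl⟩ := RingQuot.mkAlgHom_surjective kk (AhatRel A) x
  induction y using FreeAlgebra.induction with
  | grade0 r =>
    rw [AlgHom.commutes, Algebra.algebraMap_eq_smul_one]
    exact N.smul_mem r (Submodule.subset_span ⟨[], rfl⟩)
  | grade1 p => exact Submodule.subset_span ⟨[p], by simp [fgen, Xg]⟩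
  | mul a b ha hb => rw [map_mul]; exact hmul (Submodule.mul_mem_mul ha hb)
  | add a b ha hb => rw [map_add]; exact N.add_mem ha hb

theorem fgen_mul_fgen_of_lt (a b : I) {m p : ℤ} (h : m < p) :
    fgen A a m * fgen A b p =
      qq ^ ((-1 : ℤ) ^ (p - m + 1).natAbs * A.form (alphaF a) (alphaF b)) •
          (fgen A b p * fgen A a m) +
        (if b = a ∧ p = m + 1 then 1 - qi A a ^ 2 else 0) • 1 := by
  have hrel := RingQuot.mkAlgHom_rel kk (AhatRel.boson (A := A) a b m p h)
  simp only [map_add, map_mul, map_smul, apply_ite (RingQuot.mkAlgHom kk (AhatRel A)),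
    map_one, map_zero] at hrel
  simp only [fgen, hrel]
  split_ifs <;> simp

theorem wordProd_of_ascent (v₁ v₂ : List (I × ℤ)) {x y : I × ℤ} (h : x.2 < y.2) :
    wordProd A (v₁ ++ x :: y :: v₂) =
      qq ^ ((-1 : ℤ) ^ (y.2 - x.2 + 1).natAbs * A.form (alphaF x.1) (alphaF y.1)) •
          wordProd A (v₁ ++ y :: x :: v₂) +
        (if y = (x.1, x.2 + 1) then 1 - qi A x.1 ^ 2 else 0) • wordProd A (v₁ ++ v₂) := by
  have hxy : (y = (x.1, x.2 + 1)) ↔ (y.1 = x.1 ∧ y.2 = x.2 + 1) := Prod.ext_iff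
  simp only [wordProd_append, wordProd_cons, ← mul_assoc _ (fgen A y.1 y.2),
    fgen_mul_fgen_of_lt A x.1 y.1 h, hxy]
  simp only [add_mul, mul_add, smul_mul_assoc, mul_smul_comm, one_mul, mul_assoc]

theorem map_wordProd_eq_zero_of_ordered {V : Type*} [AddCommGroup V] [Module kk V]
    (f : Ahat A →ₗ[kk] V) {S : Set (List (I × ℤ))}
    (swap_mem : ∀ v₁ v₂ x y, x.2 < y.2 → v₁ ++ x :: y :: v₂ ∈ S → v₁ ++ y :: x :: v₂ ∈ S)
    (delete_mem : ∀ v₁ v₂ x y, y = (x.1, x.2 + 1) → v₁ ++ x :: y :: v₂ ∈ S → v₁ ++ v₂ ∈ S)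
    (ordered : ∀ u ∈ S, IsOrdered u → f (wordProd A u) = 0) (u : List (I × ℤ)) (hu : u ∈ S) :
    f (wordProd A u) = 0 := by
  rcases isOrdered_or_exists_ascent u with hord | ⟨v₁, x, y, v₂, rfl, hxy⟩
  · exact ordered u hu hord
  have hswap := map_wordProd_eq_zero_of_ordered f swap_mem delete_mem ordered _
    (swap_mem v₁ v₂ x y hxy hu)
  rw [wordProd_of_ascent A v₁ v₂ hxy, map_add, map_smul, map_smul, hswap, smul_zero, zero_add]
  split_ifs with hy
  · rw [map_wordProd_eq_zero_of_ordered f swap_mem delete_mem ordered _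
      (delete_mem v₁ v₂ x y hy hu), smul_zero]
  · rw [zero_smul]
termination_by (u.length, inversions u)
decreasing_by
  all_goals subst_vars
  · exact Prod.Lex.right' _ (by simp) (by rw [inversions_swap v₁ v₂ hxy]; omega)
  · exact Prod.Lex.left _ _ (by simp)

end Monomials

section Invariance

variable {A : CartanDatum I} {i : I} {T : Ahat A ≃ₐ[kk] Ahat A}

theorem descProd_eq_prod_map (g : ℤ → Ahat A) (a b : ℤ) :
    descProd A g a b = ((List.range (b + 1 - a).toNat).map fun t : ℕ => g (b - t)).prod := by
  -- the definition of `descProd` casts `List.range _ : List ℕ` to `List ℤ` through the list monad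
  change (List.map (fun t : ℤ => g (b - t))
    (List.flatMap (fun t : ℕ => [(t : ℤ)]) (List.range (b + 1 - a).toNat))).prod = _
  rw [← List.map_eq_flatMap, List.map_map]
  rfl

theorem descProd_of_le (g : ℤ → Ahat A) {a b : ℤ} (h : a ≤ b) :
    descProd A g a b = g b * descProd A g a (b - 1) := by
  obtain ⟨n, hn⟩ : ∃ n : ℕ, (b + 1 - a).toNat = n + 1 := ⟨(b - a).toNat, by omega⟩
  simp only [descProd_eq_prod_map, hn, show (b - 1 + 1 - a).toNat = n by omega,
    List.range_succ_eq_map]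
  simp [Function.comp_def, sub_add_eq_sub_sub, sub_right_comm]

theorem descProd_of_lt (g : ℤ → Ahat A) {a b : ℤ} (h : b < a) : descProd A g a b = 1 := by
  simp [descProd, Int.toNat_eq_zero.mpr (by omega : b + 1 - a ≤ 0)]

theorem descProd_congr {g g' : ℤ → Ahat A} {a b : ℤ} (h : ∀ k, a ≤ k → k ≤ b → g k = g' k) :
    descProd A g a b = descProd A g' a b := by
  simp only [descProd_eq_prod_map]
  congr 1
  refine List.map_congr_left fun t ht => ?_
  have := List.mem_range.mp ht
  exact h _ (by omega) (by omega)

theorem IsOrdered.descProd_wordProd_filter {u : List (I × ℤ)} (hu : IsOrdered u) {a b : ℤ}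
    (hab : ∀ x ∈ u, a ≤ x.2 ∧ x.2 ≤ b) :
    descProd A (fun k => wordProd A (u.filter (·.2 = k))) a b = wordProd A u := by
  induction hn : (b + 1 - a).toNat generalizing b u with
  | zero =>
    obtain rfl : u = [] := eq_nil_iff_forall_not_mem.mpr fun x hx => by
      have := hab x hx; omega
    exact descProd_of_lt _ (by omega)
  | succ n ih =>
    have hlower : ∀ k ≤ b - 1, (u.filter (·.2 ≠ b)).filter (·.2 = k) = u.filter (·.2 = k) := by
      intro k hk
      rw [List.filter_filter]
      exact List.filter_congr fun x _ => by by_cases x.2 = k <;> grind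
    have hrest : descProd A (fun k => wordProd A (u.filter (·.2 = k))) a (b - 1) =
        wordProd A (u.filter (·.2 ≠ b)) := by
      rw [← ih (b := b - 1) (hu.sublist filter_sublist) (fun x hx => ?_) (by omega)]
      · exact descProd_congr fun k _ hk => congrArg (wordProd A) (hlower k hk).symm
      · have := hab x (mem_of_mem_filter hx)
        have := of_decide_eq_true (mem_filter.mp hx).2
        omega
    rw [descProd_of_le _ (by omega), hrest, ← wordProd_append,
      hu.filter_append_filter fun x hx => (hab x hx).2]

theorem wordProd_mem_subAB {u : List (I × ℤ)} {k : ℤ} (h : ∀ x ∈ u, x.2 = k) :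
    wordProd A u ∈ subAB A k k := by
  induction u with
  | nil => exact (subAB A k k).one_mem
  | cons x t ih =>
    simp only [List.forall_mem_cons] at h
    exact mul_mem (Algebra.subset_adjoin ⟨x.1, x.2, by omega, rfl⟩) (ih h.2)

theorem _root_.IsProjM.map_wordProd_eq_zero {M : Ahat A →ₗ[kk] kk} (hM : IsProjM A M)
    {u : List (I × ℤ)} (hu : IsOrdered u) (hne : u ≠ []) : M (wordProd A u) = 0 := by
  obtain ⟨x, t, rfl⟩ := exists_cons_of_ne_nil hne
  obtain ⟨a, ha⟩ := ((x :: t).map (·.2)).toFinset.bddBelow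
  have hab : ∀ z ∈ x :: t, a ≤ z.2 ∧ z.2 ≤ x.2 := fun z hz =>
    ⟨ha (List.mem_toFinset.mpr (mem_map_of_mem hz)), by
      rcases List.mem_cons.mp hz with rfl | hz
      exacts [le_rfl, (List.pairwise_cons.mp hu).1 z hz]⟩
  have hblock : ∀ k, (∀ z ∈ (x :: t).filter (·.2 = k), z.2 = k) := fun k z hz => by
    simpa using (mem_filter.mp hz).2
  rw [← hu.descProd_wordProd_filter hab]
  refine hM.2 a x.2 (fun k => wtList ((x :: t).filter (·.2 = k)))
    ⟨x.2, (hab x mem_cons_self).1, le_rfl, wtList_ne_zero_of_forall_snd_eq (hblock x.2)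
      (ne_nil_of_mem (a := x) (by simp))⟩ _ fun k _ _ =>
    ⟨wordProd_mem_subAB (hblock k), Submodule.subset_span ⟨_, rfl, rfl⟩⟩

theorem wordProd_mul_mem_span (v : List (I × ℤ)) {S : Set (List (I × ℤ))} {z : Ahat A}
    (hz : z ∈ Submodule.span kk (wordProd A '' S)) :
    wordProd A v * z ∈ Submodule.span kk (wordProd A '' ((v ++ ·) '' S)) := by
  have := Submodule.mem_map_of_mem (f := LinearMap.mulLeft kk (wordProd A v)) hz
  rw [Submodule.map_span, Set.image_image] at this
  rw [Set.image_image]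
  simpa using this

theorem _root_.IsBraidT.map_wordProd_mem_span (hT : IsBraidT A i T) (w : List (I × ℤ)) :
    T (wordProd A w) ∈ Submodule.span kk (wordProd A '' {u | IsExpansion i w u}) := by
  induction w with
  | nil => exact Submodule.subset_span ⟨[], IsExpansion.nil, by simp⟩
  | cons x w ih =>
    obtain ⟨j, m⟩ := x
    rw [wordProd_cons, map_mul]
    by_cases hj : j = i
    · subst hj
      have := wordProd_mul_mem_span [(j, m + 1)] ih
      rw [wordProd_cons, wordProd_nil, mul_one] at this
      rw [hT.1 m]
      refine Submodule.span_mono (Set.image_mono ?_) this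
      rintro _ ⟨u, hu, rfl⟩
      exact IsExpansion.self m hu
    · rw [hT.2 j hj m, Finset.sum_mul]
      refine Submodule.sum_mem _ fun r _ => ?_
      set s := (-A.c i j).toNat - r
      have hprod : fgen A i m ^ r * fgen A j m * fgen A i m ^ s =
          wordProd A (replicate r (i, m) ++ (j, m) :: replicate s (i, m)) := by
        simp [mul_assoc]
      simp only [Fdiv, smul_mul_assoc, mul_smul_comm, hprod]
      refine Submodule.smul_mem _ _ (Submodule.smul_mem _ _ (Submodule.smul_mem _ _ ?_))
      refine Submodule.span_mono (Set.image_mono ?_) (wordProd_mul_mem_span _ ih)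
      rintro _ ⟨u, hu, rfl⟩
      simpa using IsExpansion.other m r s hj hu

theorem _root_.IsBraidT.map_wordProd_of_forall_fst_eq (hT : IsBraidT A i T) {w : List (I × ℤ)}
    (hw : ∀ z ∈ w, z.1 = i) : T (wordProd A w) = wordProd A (w.map fun z => (i, z.2 + 1)) := by
  induction w with
  | nil => simp
  | cons x w ih =>
    obtain ⟨j, m⟩ := x
    simp only [List.forall_mem_cons] at hw
    obtain ⟨rfl, hw⟩ := hw
    rw [wordProd_cons, map_mul, ih hw, List.map_cons, wordProd_cons, hT.1 m]

theorem _root_.IsProjM.map_wordProd_eq_zero_of_noRaisingPair {M : Ahat A →ₗ[kk] kk}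
    (hM : IsProjM A M) {u : List (I × ℤ)} (hu : NoRaisingPair i u) (hne : ∃ z ∈ u, z.1 ≠ i) :
    M (wordProd A u) = 0 := by
  refine map_wordProd_eq_zero_of_ordered A M (S := {u | NoRaisingPair i u ∧ ∃ z ∈ u, z.1 ≠ i})
    ?_ ?_ (fun u hu hord => hM.map_wordProd_eq_zero hord ?_) u ⟨hu, hne⟩
  · rintro v₁ v₂ x y hxy ⟨hu, z, hz, hzi⟩
    exact ⟨hu.swap hxy, z, by simp only [mem_append, List.mem_cons] at hz ⊢; grind, hzi⟩
  · rintro v₁ v₂ x y rfl ⟨hu, z, hz, hzi⟩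
    have hxi : x.1 = i := by
      have := (List.pairwise_append.mp hu).2.1
      simp only [List.pairwise_cons, List.mem_cons] at this
      by_contra hxi
      exact this.1 _ (Or.inl rfl) hxi rfl rfl
    refine ⟨hu.delete, z, ?_, hzi⟩
    simp only [mem_append, List.mem_cons] at hz ⊢
    grind
  · rintro rfl
    simp at hu

theorem _root_.IsProjM.map_braid_wordProd_of_isOrdered {M : Ahat A →ₗ[kk] kk} (hM : IsProjM A M)
    (hT : IsBraidT A i T) {u : List (I × ℤ)} (hu : IsOrdered u) :
    M (T (wordProd A u)) = M (wordProd A u) := by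
  rcases eq_or_ne u [] with rfl | hne
  · simp
  rw [hM.map_wordProd_eq_zero hu hne]
  by_cases hall : ∀ z ∈ u, z.1 = i
  · rw [hT.map_wordProd_of_forall_fst_eq hall]
    refine hM.map_wordProd_eq_zero ?_ (by simpa using hne)
    exact List.pairwise_map.mpr (hu.imp fun h => by simpa using h)
  · push Not at hall
    refine Submodule.span_induction ?_ (map_zero M) (fun _ _ _ _ hx hy => by
      rw [map_add, hx, hy, add_zero]) (fun c _ _ hx => by rw [map_smul, hx, smul_zero])
      (hT.map_wordProd_mem_span u)
    rintro _ ⟨v, hv, rfl⟩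
    exact hM.map_wordProd_eq_zero_of_noRaisingPair (hv.noRaisingPair hu) (hv.exists_fst_ne hall)

theorem _root_.IsProjM.map_braid_wordProd {M : Ahat A →ₗ[kk] kk} (hM : IsProjM A M)
    (hT : IsBraidT A i T) (u : List (I × ℤ)) : M (T (wordProd A u)) = M (wordProd A u) :=
  sub_eq_zero.mp <| map_wordProd_eq_zero_of_ordered A (M ∘ₗ T.toLinearMap - M) (S := Set.univ)
    (fun _ _ _ _ _ _ => trivial) (fun _ _ _ _ _ _ => trivial)
    (fun _ _ hu => sub_eq_zero.mpr (hM.map_braid_wordProd_of_isOrdered hT hu)) u trivial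

end Invariance

end BosonicExtension

/-- For every `i ∈ I` and every `x ∈ Â`, one has `M(T_i(x)) = M(x)`, where
`M : Â → k` is the projection onto the degree-zero component of the triangular
decomposition of `Â`. -/
theorem statement4 {I : Type} [Fintype I] [DecidableEq I] (A : CartanDatum I) (i : I)
    (T : Ahat A ≃ₐ[kk] Ahat A) (hT : IsBraidT A i T)
    (M : Ahat A →ₗ[kk] kk) (hM : IsProjM A M) :
    ∀ x : Ahat A, M (T x) = M x :=
  LinearMap.congr_fun <| LinearMap.ext_on_range (f := M ∘ₗ T.toLinearMap)
    (BosonicExtension.span_range_wordProd A) (hM.map_braid_wordProd hT)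
end
end

section
/- Let C be a ring, let X' ⊆ X be right C-modules and Y' ⊆ Y be left C-modules. Assume X and Y are flat, and that either X/X' or Y/Y' is flat. Then: (i) the natural maps X'⊗_C Y' → X'⊗_C Y → X⊗_C Y and X'⊗_C Y' → X⊗_C Y' → X⊗_C Y are all injective; and (ii) inside X⊗_C Y one has (X⊗_C Y') ∩ (X'⊗_C Y) = X'⊗_C Y'. -/
/-!
Say `X/X'` is flat; the other case is symmetric. Then `Tor₁(X/X', -)` vanishes, so `X' ⊗ N → X ⊗ N`
is injective for every `N`; composed with the injection `X ⊗ Y' → X ⊗ Y` given by flatness of `X`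
this makes `X' ⊗ Y' → X ⊗ Y` injective. An element of `X ⊗ Y'` whose image in `X ⊗ Y` lies in
`X' ⊗ Y` vanishes in `(X/X') ⊗ Y`, hence, `X/X'` being flat, already in `(X/X') ⊗ Y'`, so by
right exactness of `- ⊗ Y'` it comes from `X' ⊗ Y'`.
-/

open TensorProduct

namespace TensorProduct

variable {R : Type*} [CommRing R] {A B Q M N : Type*}
  [AddCommGroup A] [AddCommGroup B] [AddCommGroup Q] [AddCommGroup M] [AddCommGroup N]
  [Module R A] [Module R B] [Module R Q] [Module R M] [Module R N]

theorem range_map_comm (f : A →ₗ[R] B) (g : M →ₗ[R] N) :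
    LinearMap.range (map g f) =
      (LinearMap.range (map f g)).map (TensorProduct.comm R B N).toLinearMap := by
  rw [← LinearMap.range_comp, ← map_comp_comm_eq,
    LinearMap.range_comp_of_range_eq_top _ (LinearEquiv.range _)]

variable [Module.Flat R Q] {i : A →ₗ[R] B} {p : B →ₗ[R] Q} {j : M →ₗ[R] N}

theorem _root_.LinearMap.rTensor_injective_of_exact_of_flat (hip : Function.Exact i p)
    (hp : Function.Surjective p) (hi : Function.Injective i) :
    Function.Injective (i.rTensor M) :=
  (i.lTensor_inj_iff_rTensor_inj M).mp <| p.lTensor_injective_of_exact_of_flat hp i hi hip M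

theorem map_injective_of_exact_of_flat_left [Module.Flat R B] (hip : Function.Exact i p)
    (hp : Function.Surjective p) (hi : Function.Injective i) (hj : Function.Injective j) :
    Function.Injective (map i j) := by
  rw [← LinearMap.lTensor_comp_rTensor]
  exact (Module.Flat.lTensor_preserves_injective_linearMap j hj).comp
    (LinearMap.rTensor_injective_of_exact_of_flat hip hp hi)

theorem map_injective_of_exact_of_flat_right [Module.Flat R B] (hip : Function.Exact i p)
    (hp : Function.Surjective p) (hi : Function.Injective i) (hj : Function.Injective j) :
    Function.Injective (map j i) := by
  rw [← LinearMap.rTensor_comp_lTensor]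
  exact (Module.Flat.rTensor_preserves_injective_linearMap j hj).comp
    (p.lTensor_injective_of_exact_of_flat hp i hi hip M)

theorem range_lTensor_inf_range_rTensor_of_exact_of_flat_left (hip : Function.Exact i p)
    (hp : Function.Surjective p) (hj : Function.Injective j) :
    LinearMap.range (j.lTensor B) ⊓ LinearMap.range (i.rTensor N) =
      LinearMap.range (map i j) := by
  refine le_antisymm ?_ (le_inf ?_ ?_)
  · rintro t ⟨⟨a, rfl⟩, ⟨b, hb⟩⟩
    have hpa : j.lTensor Q (p.rTensor M a) = 0 := by
      calc j.lTensor Q (p.rTensor M a) = p.rTensor N (j.lTensor B a) := by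
            rw [← LinearMap.comp_apply, LinearMap.lTensor_comp_rTensor,
              ← LinearMap.rTensor_comp_lTensor, LinearMap.comp_apply]
        _ = 0 := by
            rw [← hb, ← LinearMap.comp_apply, ← LinearMap.rTensor_comp,
              hip.linearMap_comp_eq_zero, LinearMap.rTensor_zero, LinearMap.zero_apply]
    obtain ⟨u, rfl⟩ := (rTensor_exact M hip hp a).mp <|
      Module.Flat.lTensor_preserves_injective_linearMap j hj (hpa.trans (map_zero _).symm)
    exact ⟨u, by rw [← LinearMap.lTensor_comp_rTensor, LinearMap.comp_apply]⟩
  · rw [← LinearMap.lTensor_comp_rTensor]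
    exact LinearMap.range_comp_le_range _ _
  · rw [← LinearMap.rTensor_comp_lTensor]
    exact LinearMap.range_comp_le_range _ _

theorem range_lTensor_inf_range_rTensor_of_exact_of_flat_right (hip : Function.Exact i p)
    (hp : Function.Surjective p) (hj : Function.Injective j) :
    LinearMap.range (i.lTensor N) ⊓ LinearMap.range (j.rTensor B) =
      LinearMap.range (map j i) := by
  rw [LinearMap.lTensor_def, LinearMap.rTensor_def, range_map_comm i LinearMap.id,
    range_map_comm LinearMap.id j, range_map_comm i j, inf_comm,
    ← Submodule.map_inf _ (TensorProduct.comm R B N).injective]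
  exact congrArg _ (range_lTensor_inf_range_rTensor_of_exact_of_flat_left hip hp hj)

end TensorProduct

/-- Let `C` be a ring, `X' ⊆ X` and `Y' ⊆ Y` be `C`-modules with `X`
and `Y` flat, and assume that `X/X'` or `Y/Y'` is flat. Then (i) the natural maps
`X' ⊗ Y' → X' ⊗ Y → X ⊗ Y` and `X' ⊗ Y' → X ⊗ Y' → X ⊗ Y` are all injective, and
(ii) inside `X ⊗ Y` one has `(X ⊗ Y') ∩ (X' ⊗ Y) = X' ⊗ Y'`. -/
theorem statement10 (C : Type*) [CommRing C]
    (X Y : Type*) [AddCommGroup X] [AddCommGroup Y] [Module C X] [Module C Y]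
    (X' : Submodule C X) (Y' : Submodule C Y)
    (hX : Module.Flat C X) (hY : Module.Flat C Y)
    (hflat : Module.Flat C (X ⧸ X') ∨ Module.Flat C (Y ⧸ Y')) :
    (Function.Injective
        (TensorProduct.map X'.subtype Y'.subtype : X' ⊗[C] Y' →ₗ[C] X ⊗[C] Y) ∧
      Function.Injective
        (TensorProduct.map X'.subtype (LinearMap.id : Y →ₗ[C] Y) :
          X' ⊗[C] Y →ₗ[C] X ⊗[C] Y) ∧
      Function.Injective
        (TensorProduct.map (LinearMap.id : X →ₗ[C] X) Y'.subtype :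
          X ⊗[C] Y' →ₗ[C] X ⊗[C] Y)) ∧
    LinearMap.range
        (TensorProduct.map (LinearMap.id : X →ₗ[C] X) Y'.subtype :
          X ⊗[C] Y' →ₗ[C] X ⊗[C] Y) ⊓
      LinearMap.range
        (TensorProduct.map X'.subtype (LinearMap.id : Y →ₗ[C] Y) :
          X' ⊗[C] Y →ₗ[C] X ⊗[C] Y) =
    LinearMap.range
        (TensorProduct.map X'.subtype Y'.subtype : X' ⊗[C] Y' →ₗ[C] X ⊗[C] Y) := by
  have := hX
  have := hY
  have hX'Y : Function.Injective (X'.subtype.rTensor Y) :=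
    Module.Flat.rTensor_preserves_injective_linearMap _ X'.injective_subtype
  have hXY' : Function.Injective (Y'.subtype.lTensor X) :=
    Module.Flat.lTensor_preserves_injective_linearMap _ Y'.injective_subtype
  rcases hflat with hQ | hQ
  · have hseq := LinearMap.exact_subtype_mkQ X'
    exact ⟨⟨map_injective_of_exact_of_flat_left hseq X'.mkQ_surjective X'.injective_subtype
        Y'.injective_subtype, hX'Y, hXY'⟩,
      range_lTensor_inf_range_rTensor_of_exact_of_flat_left hseq X'.mkQ_surjective
        Y'.injective_subtype⟩
  · have hseq := LinearMap.exact_subtype_mkQ Y'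
    exact ⟨⟨map_injective_of_exact_of_flat_right hseq Y'.mkQ_surjective Y'.injective_subtype
        X'.injective_subtype, hX'Y, hXY'⟩,
      range_lTensor_inf_range_rTensor_of_exact_of_flat_right hseq Y'.mkQ_surjective
        X'.injective_subtype⟩
end
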